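/- If the quadrilateral P_i Q_i P_{i+1} Q_{i+1} is an isosceles trapezoid with |P_i Q_i| = |P_{i+1} Q_{i+1}| and P_i Q_{i+1} parallel to Q_i P_{i+1}, then the signed area of triangle P_i P_{i+1} Q_{i+1} equals the signed area of triangle Q_i Q_{i+1} P_i. -/
import Mathlib


/-- Signed area of the triangle `ABC`. -/
noncomputable def triArea (A B C : ℝ × ℝ) : ℝ :=
  ((B.1 - A.1) * (C.2 - A.2) - (C.1 - A.1) * (B.2 - A.2)) / 2

theorem stmt14 (P Q P' Q' : ℝ × ℝ)
    (hlen : (P.1 - Q.1) ^ 2 + (P.2 - Q.2) ^ 2 =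
      (P'.1 - Q'.1) ^ 2 + (P'.2 - Q'.2) ^ 2)
    (hpar : (Q'.1 - P.1) * (P'.2 - Q.2) - (P'.1 - Q.1) * (Q'.2 - P.2) = 0) :
    triArea P P' Q' = triArea Q Q' P := by
  unfold triArea
  linear_combination (-1/2 : ℝ) * hpar
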